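/- arXiv:2512.10329 — 8 statements merged into one kernel-verified Lean document; each statement's English description precedes it below -/
import Mathlib

section
/- Let Δ : [0,1] → ℝ be measurable with Δ(u) ≥ Δ* > 0 for all u, and suppose there is a constant C > 0 such that for all x > 0 the Lebesgue measure of {u ∈ [0,1] : Δ(u) ≤ x} is at most C·x. Then for any α > 1, ∫₀¹ Δ(u)^(−α) du ≤ (C·α/(α−1)) · Δ*^(−(α−1)). -/
/-!
Layer cake: `∫ Δ^(-α) = ∫₀^∞ μ{Δ^(-α) > t} dt`. Since `Δ ≥ Δ*`, the integrand vanishes for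
`t > Δ*^(-α)`, and for smaller `t` the set `{Δ^(-α) > t} = {Δ < t^(-1/α)}` has measure at most
`C t^(-1/α)` by the measure condition. Integrating `C t^(-1/α)` over `(0, Δ*^(-α)]` gives the bound.
-/

open MeasureTheory Set

theorem integral_le_intervalIntegral_of_measureReal_lt_le {Ω : Type*} [MeasurableSpace Ω]
    {μ : Measure Ω} [IsFiniteMeasure μ] {f : Ω → ℝ} {g : ℝ → ℝ} {T : ℝ}
    (hf : AEStronglyMeasurable f μ) (hf_nonneg : 0 ≤ᵐ[μ] f) (hfT : ∀ᵐ a ∂μ, f a ≤ T)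
    (hT : 0 ≤ T) (hg : IntervalIntegrable g volume 0 T)
    (htail : ∀ t ∈ Ioc 0 T, μ.real {a | t < f a} ≤ g t) :
    ∫ a, f a ∂μ ≤ ∫ t in 0..T, g t := by
  have hf_int : Integrable f μ := by
    refine Integrable.of_bound hf T ?_
    filter_upwards [hf_nonneg, hfT] with a h0 h1
    rwa [Real.norm_of_nonneg h0]
  have htail_zero : ∀ t ∈ Ioi 0 \ Ioc 0 T, μ.real {a | t < f a} = 0 := by
    rintro t ⟨ht0, htT⟩
    have hTt : T < t := not_le.mp fun h => htT ⟨ht0, h⟩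
    refine (measureReal_eq_zero_iff).mpr (measure_mono_null (fun a ha => ?_) (ae_iff.mp hfT))
    exact not_le.mpr (hTt.trans ha)
  rw [hf_int.integral_eq_integral_meas_lt hf_nonneg, intervalIntegral.integral_of_le hT,
    setIntegral_eq_of_subset_of_forall_sdiff_eq_zero measurableSet_Ioi Ioc_subset_Ioi_self
      htail_zero]
  exact integral_mono_of_nonneg (ae_of_all _ fun _ => measureReal_nonneg)
    ((intervalIntegrable_iff_integrableOn_Ioc_of_le hT).mp hg)
    (ae_restrict_of_forall_mem measurableSet_Ioc htail)

theorem integral_rpow_neg_inv {α T : ℝ} (hα : 1 < α) :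
    ∫ t in 0..T, t ^ (-α⁻¹) = α / (α - 1) * T ^ (1 - α⁻¹) := by
  have hα0 : 0 < α := one_pos.trans hα
  have hexp : -α⁻¹ + 1 = 1 - α⁻¹ := by ring
  have hexp_pos : 0 < 1 - α⁻¹ := sub_pos.mpr (inv_lt_one_of_one_lt₀ hα)
  rw [integral_rpow (Or.inl (neg_lt_neg (inv_lt_one_of_one_lt₀ hα))), hexp,
    Real.zero_rpow hexp_pos.ne', sub_zero, div_eq_mul_inv, mul_comm]
  congr 1
  field_simp

theorem measureReal_lt_rpow_neg_le {Δ : ℝ → ℝ} {C α t : ℝ}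
    (hpos : ∀ u ∈ Icc (0:ℝ) 1, 0 < Δ u)
    (hmc : ∀ x > (0:ℝ), (volume {u ∈ Icc (0:ℝ) 1 | Δ u ≤ x}).toReal ≤ C * x)
    (hα : 0 < α) (ht : 0 < t) :
    (volume.restrict (Ioc (0:ℝ) 1)).real {u | t < Δ u ^ (-α)} ≤ C * t ^ (-α⁻¹) := by
  have hsub : {u | t < Δ u ^ (-α)} ∩ Ioc 0 1 ⊆ {u ∈ Icc (0:ℝ) 1 | Δ u ≤ t ^ (-α⁻¹)} := by
    rintro u ⟨hu, hu01⟩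
    refine ⟨Ioc_subset_Icc_self hu01, le_of_lt ?_⟩
    rw [← inv_neg, Real.lt_rpow_inv_iff_of_neg (hpos u (Ioc_subset_Icc_self hu01)) ht
      (neg_lt_zero.mpr hα)]
    exact hu
  calc (volume.restrict (Ioc (0:ℝ) 1)).real {u | t < Δ u ^ (-α)}
      ≤ volume.real {u ∈ Icc (0:ℝ) 1 | Δ u ≤ t ^ (-α⁻¹)} := by
        rw [measureReal_restrict_apply' measurableSet_Ioc]
        exact measureReal_mono hsub (measure_ne_top_of_subset (sep_subset _ _) (by simp))
    _ ≤ C * t ^ (-α⁻¹) := hmc _ (Real.rpow_pos_of_pos ht _)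

theorem gap_integral_bound_general (Δ : ℝ → ℝ) (Δstar C α : ℝ)
    (hmeas : Measurable Δ)
    (hlow : ∀ u ∈ Icc (0:ℝ) 1, Δstar ≤ Δ u)
    (hΔstar : 0 < Δstar)
    (hmc : ∀ x > (0:ℝ), (volume {u ∈ Icc (0:ℝ) 1 | Δ u ≤ x}).toReal ≤ C * x)
    (hα : 1 < α) :
    ∫ u in (0:ℝ)..1, (Δ u) ^ (-α) ≤ (C * α / (α - 1)) * Δstar ^ (-(α - 1)) := by
  have hα0 : 0 < α := one_pos.trans hα
  have hpos : ∀ u ∈ Icc (0:ℝ) 1, 0 < Δ u := fun u hu => hΔstar.trans_le (hlow u hu)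
  have hT : 0 ≤ Δstar ^ (-α) := (Real.rpow_pos_of_pos hΔstar _).le
  have hbounds : ∀ u ∈ Ioc (0:ℝ) 1, 0 ≤ Δ u ^ (-α) ∧ Δ u ^ (-α) ≤ Δstar ^ (-α) := fun u hu =>
    ⟨Real.rpow_nonneg (hpos u (Ioc_subset_Icc_self hu)).le _,
      Real.rpow_le_rpow_of_nonpos hΔstar (hlow u (Ioc_subset_Icc_self hu)) (neg_nonpos.mpr hα0.le)⟩
  calc ∫ u in (0:ℝ)..1, Δ u ^ (-α)
      ≤ ∫ t in 0..Δstar ^ (-α), C * t ^ (-α⁻¹) := by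
        rw [intervalIntegral.integral_of_le zero_le_one]
        refine integral_le_intervalIntegral_of_measureReal_lt_le
          (hmeas.pow_const _).aestronglyMeasurable
          (ae_restrict_of_forall_mem measurableSet_Ioc fun u hu => (hbounds u hu).1)
          (ae_restrict_of_forall_mem measurableSet_Ioc fun u hu => (hbounds u hu).2) hT
          ((intervalIntegral.intervalIntegrable_rpow'
            (neg_lt_neg (inv_lt_one_of_one_lt₀ hα))).const_mul C)
          fun t ht => measureReal_lt_rpow_neg_le hpos hmc hα0 ht.1
    _ = (C * α / (α - 1)) * Δstar ^ (-(α - 1)) := by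
        rw [intervalIntegral.integral_const_mul, integral_rpow_neg_inv hα,
          ← Real.rpow_mul hΔstar.le]
        field_simp

/-- Spectral gap integral bound: under the measure condition
`μ({u ∈ [0,1] : Δ(u) ≤ x}) ≤ C·x`, the gap-weighted integral satisfies
`∫₀¹ Δ(u)^(−α) du ≤ (C·α/(α−1)) · Δ*^(−(α−1))` for any `α > 1`. -/
theorem gap_integral_bound (Δ : ℝ → ℝ) (Δstar C α : ℝ)
    (hmeas : Measurable Δ)
    (hlow : ∀ u ∈ Icc (0:ℝ) 1, Δstar ≤ Δ u)
    (hΔstar : 0 < Δstar) (hC : 0 < C)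
    (hmc : ∀ x > (0:ℝ), (volume {u ∈ Icc (0:ℝ) 1 | Δ u ≤ x}).toReal ≤ C * x)
    (hα : 1 < α) :
    ∫ u in (0:ℝ)..1, (Δ u) ^ (-α) ≤ (C * α / (α - 1)) * Δstar ^ (-(α - 1)) :=
  gap_integral_bound_general Δ Δstar C α hmeas hlow hΔstar hmc hα
end

section
/- For N ≥ 2, the function Δ(s) = sqrt((1−2s)² + (4/N)·s·(1−s)) on [0,1] satisfies the measure condition with constant C = sqrt(N/(N−1)): for every x > 0, the Lebesgue measure of {s ∈ [0,1] : Δ(s) ≤ x} is at most sqrt(N/(N−1))·x. -/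
open MeasureTheory Set

/-! The identity `N Δ(s)² = 4(N − 1)(s − 1/2)² + 1` shows that `Δ(s) ≥ 2√((N−1)/N) |s − 1/2|`, so the
sublevel set `{Δ ≤ x}` lies in the interval of radius `√(N/(N−1)) x / 2` around `1/2`. -/

theorem volume_sep_le_ofReal_of_abs_sub_le {S : Set ℝ} {f : ℝ → ℝ} {a k : ℝ} (hk : 0 ≤ k)
    (hf : ∀ s ∈ S, |s - a| ≤ k * f s) (x : ℝ) :
    volume {s ∈ S | f s ≤ x} ≤ ENNReal.ofReal (2 * (k * x)) := by
  have hsub : {s ∈ S | f s ≤ x} ⊆ Metric.closedBall a (k * x) := fun s ⟨hs, hfx⟩ => by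
    rw [Metric.mem_closedBall, Real.dist_eq]
    exact (hf s hs).trans (mul_le_mul_of_nonneg_left hfx hk)
  exact (measure_mono hsub).trans_eq (Real.volume_closedBall a (k * x))

theorem grover_gap_sq_eq {N : ℝ} (hN : N ≠ 0) (s : ℝ) :
    (1 - 2*s)^2 + (4/N) * s * (1 - s) = 4 * (N - 1) / N * (s - 1/2)^2 + 1 / N := by
  field_simp
  ring

theorem abs_sub_half_le_grover_gap {N : ℝ} (hN : 1 < N) (s : ℝ) :
    |s - 1/2| ≤ Real.sqrt (N / (N - 1)) / 2 * Real.sqrt ((1 - 2*s)^2 + (4/N) * s * (1 - s)) := by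
  have hN0 : N - 1 ≠ 0 := by linarith
  have hc : 0 ≤ N / (N - 1) := div_nonneg (by linarith) (by linarith)
  have hsq : (s - 1/2)^2 ≤ N / (N - 1) / 4 * ((1 - 2*s)^2 + (4/N) * s * (1 - s)) := by
    rw [grover_gap_sq_eq (by linarith) s, mul_add, ← mul_assoc,
      show N / (N - 1) / 4 * (4 * (N - 1) / N) = 1 by field_simp]
    have : 0 ≤ N / (N - 1) / 4 * (1 / N) := by
      have : 0 < N := by linarith
      positivity
    linarith
  calc |s - 1/2| ≤ Real.sqrt (N / (N - 1) / 4 * ((1 - 2*s)^2 + (4/N) * s * (1 - s))) :=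
        Real.abs_le_sqrt hsq
    _ = Real.sqrt (N / (N - 1)) / 2 * Real.sqrt ((1 - 2*s)^2 + (4/N) * s * (1 - s)) := by
        rw [Real.sqrt_mul (by positivity), Real.sqrt_div' _ (by norm_num : (0:ℝ) ≤ 4),
          show (4:ℝ) = 2 ^ 2 by norm_num, Real.sqrt_sq (by norm_num)]

/-- The Grover spectral gap `Δ(s) = √((1−2s)² + (4/N)s(1−s))` satisfies the measure
condition with constant `√(N/(N−1))`. -/
theorem grover_gap_measure_condition (N : ℝ) (hN : 2 ≤ N) (x : ℝ) (hx : 0 < x) :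
    (volume {s ∈ Icc (0:ℝ) 1 |
        Real.sqrt ((1 - 2*s)^2 + (4/N) * s * (1 - s)) ≤ x}).toReal
      ≤ Real.sqrt (N / (N - 1)) * x := by
  have hbound := volume_sep_le_ofReal_of_abs_sub_le (S := Icc (0:ℝ) 1)
    (by positivity : 0 ≤ Real.sqrt (N / (N - 1)) / 2)
    (fun s _ => abs_sub_half_le_grover_gap (by linarith) s) x
  rw [show 2 * (Real.sqrt (N / (N - 1)) / 2 * x) = Real.sqrt (N / (N - 1)) * x by ring] at hbound
  exact ENNReal.toReal_le_of_le_ofReal (by positivity) hbound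
end

section
/- Let Δ : [0,1] → ℝ be measurable with Δ* ≤ Δ(u) for all u, Δ* > 0, satisfying the measure condition with constant C. Then for any p ∈ (1,2), the normalization constant c_p = ∫₀¹ Δ(u)^(−p) du satisfies c_p ≤ (C·p/(p−1)) · Δ*^(−(p−1)). -/
/-!
Layer cake: `∫₀¹ Δ^{-p} = ∫₀^M |{Δ^{-p} ≥ t}| dt` with `M = Δ*^{-p}`, since `Δ^{-p} ≤ M`.
The level set `{Δ^{-p} ≥ t}` is `{Δ ≤ t^{-1/p}}`, of measure at most `C t^{-1/p}` by the
measure condition, and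
`∫₀^M C t^{-1/p} dt = C p/(p-1) · M^{(p-1)/p} = C p/(p-1) · Δ*^{-(p-1)}`.
-/

open MeasureTheory Set

theorem integral_le_of_measureReal_le_mul_rpow {α : Type*} [MeasurableSpace α] {μ : Measure α}
    [IsFiniteMeasure μ] {f : α → ℝ} {M C r : ℝ} (hf : AEStronglyMeasurable f μ)
    (hf0 : 0 ≤ᵐ[μ] f) (hfM : f ≤ᵐ[μ] fun _ ↦ M) (hM : 0 ≤ M) (hr : r < 1)
    (htail : ∀ t ∈ Ioc 0 M, μ.real {x | t ≤ f x} ≤ C * t ^ (-r)) :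
    ∫ x, f x ∂μ ≤ C * (M ^ (1 - r) / (1 - r)) := by
  have hint : Integrable f μ := Integrable.of_bound hf M <| by
    filter_upwards [hf0, hfM] with x h0 hxM
    rwa [Real.norm_eq_abs, abs_of_nonneg h0]
  have hr' : -1 < -r := by linarith
  have hpow : IntegrableOn (fun t ↦ C * t ^ (-r)) (Ioc 0 M) :=
    (intervalIntegral.intervalIntegrable_rpow' hr').1.const_mul C
  calc ∫ x, f x ∂μ = ∫ t in Ioc 0 M, μ.real {x | t ≤ f x} :=
        hint.integral_eq_integral_Ioc_meas_le hf0 hfM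
    _ ≤ ∫ t in Ioc 0 M, C * t ^ (-r) :=
        setIntegral_mono_of_nonneg (fun _ _ ↦ measureReal_nonneg) htail hpow
    _ = C * (M ^ (1 - r) / (1 - r)) := by
        rw [← intervalIntegral.integral_of_le hM, intervalIntegral.integral_const_mul,
          integral_rpow (Or.inl hr'), Real.zero_rpow (by linarith)]
        ring_nf

theorem measureReal_restrict_setOf_le_rpow_neg_le {Δ : ℝ → ℝ} {C p t : ℝ}
    (hpos : ∀ u ∈ Icc (0:ℝ) 1, 0 < Δ u)
    (hmc : ∀ x > (0:ℝ), volume.real {u ∈ Icc (0:ℝ) 1 | Δ u ≤ x} ≤ C * x)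
    (hp : 0 < p) (ht : 0 < t) :
    (volume.restrict (Ioc (0:ℝ) 1)).real {u | t ≤ Δ u ^ (-p)} ≤ C * t ^ (-p⁻¹) := by
  have hsub :
      {u | t ≤ Δ u ^ (-p)} ∩ Ioc 0 1 ⊆ {u ∈ Icc (0:ℝ) 1 | Δ u ≤ t ^ (-p⁻¹)} := by
    rintro u ⟨hu, hu01⟩
    refine ⟨Ioc_subset_Icc_self hu01, ?_⟩
    rw [← inv_neg]
    exact (Real.le_rpow_inv_iff_of_neg (hpos u (Ioc_subset_Icc_self hu01)) ht
      (neg_neg_of_pos hp)).2 hu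
  rw [measureReal_restrict_apply' measurableSet_Ioc]
  have hfin : volume {u ∈ Icc (0:ℝ) 1 | Δ u ≤ t ^ (-p⁻¹)} ≠ ⊤ :=
    ((measure_mono (sep_subset _ _)).trans_lt measure_Icc_lt_top).ne
  exact (measureReal_mono hsub hfin).trans (hmc _ (by positivity))

theorem normalization_constant_bound_general (Δ : ℝ → ℝ) (Δstar C p : ℝ)
    (hmeas : Measurable Δ)
    (hlow : ∀ u ∈ Icc (0:ℝ) 1, Δstar ≤ Δ u)
    (hΔstar : 0 < Δstar)
    (hmc : ∀ x > (0:ℝ), (volume {u ∈ Icc (0:ℝ) 1 | Δ u ≤ x}).toReal ≤ C * x)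
    (hp : p ∈ Ioo (1:ℝ) 2) :
    ∫ u in (0:ℝ)..1, Δ u ^ (-p) ≤ (C * p / (p - 1)) * Δstar ^ (-(p - 1)) := by
  obtain ⟨hp1, -⟩ := hp
  have hp0 : 0 < p := by linarith
  have hpos : ∀ u ∈ Icc (0:ℝ) 1, 0 < Δ u := fun u hu ↦ hΔstar.trans_le (hlow u hu)
  have hbdd : ∀ᵐ u ∂volume.restrict (Ioc (0:ℝ) 1),
      0 ≤ Δ u ^ (-p) ∧ Δ u ^ (-p) ≤ Δstar ^ (-p) := by
    refine (ae_restrict_iff' measurableSet_Ioc).2 (.of_forall fun u hu ↦ ?_)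
    have hu : u ∈ Icc (0:ℝ) 1 := Ioc_subset_Icc_self hu
    exact ⟨(Real.rpow_pos_of_pos (hpos u hu) _).le,
      Real.rpow_le_rpow_of_nonpos hΔstar (hlow u hu) (by linarith)⟩
  rw [intervalIntegral.integral_of_le zero_le_one]
  refine (integral_le_of_measureReal_le_mul_rpow (hmeas.pow_const _).aestronglyMeasurable
    (hbdd.mono fun _ h ↦ h.1) (hbdd.mono fun _ h ↦ h.2) (by positivity)
    (inv_lt_one_of_one_lt₀ hp1)
    fun t ht ↦ measureReal_restrict_setOf_le_rpow_neg_le hpos hmc hp0 ht.1).trans_eq ?_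
  have hexp : 1 - p⁻¹ = (p - 1) / p := by field_simp
  rw [← Real.rpow_mul hΔstar.le, hexp, neg_mul, mul_div_cancel₀ _ hp0.ne']
  field_simp

/-- Bound on the power-law normalization constant `c_p = ∫₀¹ Δ(u)^(−p) du` under the
measure condition. -/
theorem normalization_constant_bound (Δ : ℝ → ℝ) (Δstar C p : ℝ)
    (hmeas : Measurable Δ)
    (hlow : ∀ u ∈ Icc (0:ℝ) 1, Δstar ≤ Δ u)
    (hΔstar : 0 < Δstar) (hC : 0 < C)
    (hmc : ∀ x > (0:ℝ), (volume {u ∈ Icc (0:ℝ) 1 | Δ u ≤ x}).toReal ≤ C * x)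
    (hp : p ∈ Ioo (1:ℝ) 2) :
    ∫ u in (0:ℝ)..1, Δ u ^ (-p) ≤ (C * p / (p - 1)) * Δstar ^ (-(p - 1)) :=
  normalization_constant_bound_general Δ Δstar C p hmeas hlow hΔstar hmc hp
end

section
/- Let Δ : [0,1] → ℝ be measurable with Δ(u) ≥ Δ* > 0 and satisfying the measure condition with constant C, and let p ∈ (1,2). Suppose u : [0,1] → [0,1] is a C¹ bijection with u' (s) = c_p Δ(u(s))^p where c_p = ∫₀¹ Δ^{−p}. Then the boundary terms satisfy u'(0)/Δ(u(0))² ≤ (Cp/(p−1))·Δ*^{−1} and u'(1)/Δ(u(1))² ≤ (Cp/(p−1))·Δ*^{−1}. -/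
open MeasureTheory Set

/-!
Since `u' = c_p Δ(u)^p`, the boundary term is `c_p Δ(u)^(p-2) ≤ c_p Δ*^(p-2)` because `p < 2`.
The constant `c_p = ∫ Δ^(-p)` is bounded by the layer-cake formula: the superlevel set
`{Δ^(-p) ≥ t}` is the sublevel set `{Δ ≤ t^(-1/p)}`, of measure at most `C t^(-1/p)` by the
measure condition, and it is empty for `t > Δ*^(-p)`. Hence
`c_p ≤ ∫₀^{Δ*^(-p)} C t^(-1/p) dt = (Cp/(p-1)) Δ*^(1-p)`, and `Δ*^(1-p) Δ*^(p-2) = Δ*⁻¹`.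
-/

section LayerCake

variable {α : Type*} [MeasurableSpace α] {μ : Measure α} {f : α → ℝ} {m C p : ℝ}

lemma measure_le_rpow_neg_le (hp : 0 < p)
    (hmc : ∀ x > 0, μ {a | f a ≤ x} ≤ ENNReal.ofReal (C * x)) {t : ℝ} (ht : 0 < t) :
    μ {a | t ≤ f a ^ (-p)} ≤ ENNReal.ofReal (C * t ^ (-p⁻¹)) := by
  refine (measure_mono fun a (ha : t ≤ f a ^ (-p)) => ?_).trans
    (hmc _ (Real.rpow_pos_of_pos ht _))
  change f a ≤ t ^ (-p⁻¹)
  rcases le_or_gt (f a) 0 with hfa | hfa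
  · exact hfa.trans (Real.rpow_pos_of_pos ht _).le
  · rwa [← inv_neg, Real.le_rpow_inv_iff_of_neg hfa ht (neg_neg_of_pos hp)]

lemma measure_le_rpow_neg_eq_zero (hm : 0 < m) (hp : 0 < p) (hlow : ∀ᵐ a ∂μ, m ≤ f a)
    {t : ℝ} (ht : m ^ (-p) < t) :
    μ {a | t ≤ f a ^ (-p)} = 0 := by
  rw [measure_eq_zero_iff_ae_notMem]
  filter_upwards [hlow] with a ha hle
  exact ((Real.rpow_le_rpow_of_nonpos hm ha (neg_nonpos.2 hp.le)).trans_lt ht).not_ge hle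

lemma integral_mul_rpow_neg_inv (C : ℝ) {p T : ℝ} (hp : 1 < p) :
    ∫ t in (0:ℝ)..T, C * t ^ (-p⁻¹) = C * p / (p - 1) * T ^ (1 - p⁻¹) := by
  have hinv : p⁻¹ < 1 := inv_lt_one_of_one_lt₀ hp
  rw [intervalIntegral.integral_const_mul, integral_rpow (Or.inl (by linarith)),
    Real.zero_rpow (by linarith), neg_add_eq_sub]
  field_simp
  ring

lemma integral_rpow_neg_le (hm : 0 < m) (hC : 0 ≤ C) (hp : 1 < p) (hf : AEMeasurable f μ)
    (hlow : ∀ᵐ a ∂μ, m ≤ f a)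
    (hmc : ∀ x > 0, μ {a | f a ≤ x} ≤ ENNReal.ofReal (C * x)) :
    ∫ a, f a ^ (-p) ∂μ ≤ C * p / (p - 1) * m ^ (1 - p) := by
  have hp0 : 0 < p := zero_lt_one.trans hp
  set T := m ^ (-p)
  have hT : 0 < T := Real.rpow_pos_of_pos hm _
  have hnonneg : 0 ≤ᵐ[μ] fun a => f a ^ (-p) :=
    hlow.mono fun a ha => Real.rpow_nonneg (hm.le.trans ha) _
  have hg_int : IntegrableOn (fun t : ℝ => C * t ^ (-p⁻¹)) (Ioc 0 T) :=
    ((intervalIntegral.intervalIntegrable_rpow'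
      (by linarith [inv_lt_one_of_one_lt₀ hp] : (-1:ℝ) < -p⁻¹)).const_mul C).1
  have hg_nonneg : 0 ≤ᵐ[volume.restrict (Ioc 0 T)] fun t : ℝ => C * t ^ (-p⁻¹) :=
    (ae_restrict_iff' measurableSet_Ioc).2 (.of_forall fun t ht =>
      mul_nonneg hC (Real.rpow_nonneg ht.1.le _))
  have hlayer : ∫⁻ a, ENNReal.ofReal (f a ^ (-p)) ∂μ ≤
      ENNReal.ofReal (∫ t in (0:ℝ)..T, C * t ^ (-p⁻¹)) := calc
    _ = ∫⁻ t in Ioi 0, μ {a | t ≤ f a ^ (-p)} :=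
      lintegral_eq_lintegral_meas_le μ hnonneg (hf.pow_const _)
    _ ≤ ∫⁻ t in Ioi 0,
        (Ioc 0 T).indicator (fun t => ENNReal.ofReal (C * t ^ (-p⁻¹))) t := by
      refine setLIntegral_mono' measurableSet_Ioi fun t (ht : 0 < t) => ?_
      by_cases htT : t ≤ T
      · rw [indicator_of_mem (show t ∈ Ioc 0 T from ⟨ht, htT⟩)]
        exact measure_le_rpow_neg_le hp0 hmc ht
      · rw [measure_le_rpow_neg_eq_zero hm hp0 hlow (not_le.1 htT)]
        exact zero_le
    _ ≤ ∫⁻ t, (Ioc 0 T).indicator (fun t => ENNReal.ofReal (C * t ^ (-p⁻¹))) t :=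
      setLIntegral_le_lintegral _ _
    _ = ENNReal.ofReal (∫ t in (0:ℝ)..T, C * t ^ (-p⁻¹)) := by
      rw [lintegral_indicator measurableSet_Ioc, intervalIntegral.integral_of_le hT.le,
        ofReal_integral_eq_lintegral_ofReal hg_int hg_nonneg]
  have hT_pow : T ^ (1 - p⁻¹) = m ^ (1 - p) := by
    rw [← Real.rpow_mul hm.le]
    congr 1
    field_simp
    ring
  rw [integral_eq_lintegral_of_nonneg_ae hnonneg (hf.pow_const _).aestronglyMeasurable, ← hT_pow,
    ← integral_mul_rpow_neg_inv C hp]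
  exact ENNReal.toReal_le_of_le_ofReal
    (intervalIntegral.integral_nonneg hT.le fun t ht => mul_nonneg hC (Real.rpow_nonneg ht.1 _))
    hlayer

end LayerCake

lemma intervalIntegral_rpow_neg_le {Δ : ℝ → ℝ} {m C p : ℝ} (hm : 0 < m) (hC : 0 ≤ C)
    (hp : 1 < p) (hmeas : Measurable Δ) (hlow : ∀ v ∈ Icc (0:ℝ) 1, m ≤ Δ v)
    (hmc : ∀ x > (0:ℝ), (volume {v ∈ Icc (0:ℝ) 1 | Δ v ≤ x}).toReal ≤ C * x) :
    ∫ v in (0:ℝ)..1, Δ v ^ (-p) ≤ C * p / (p - 1) * m ^ (1 - p) := by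
  rw [intervalIntegral.integral_of_le zero_le_one]
  refine integral_rpow_neg_le hm hC hp hmeas.aemeasurable
    ((ae_restrict_iff' measurableSet_Ioc).2
      (.of_forall fun v hv => hlow v (Ioc_subset_Icc_self hv)))
    fun x hx => ?_
  have hfin : volume {v ∈ Icc (0:ℝ) 1 | Δ v ≤ x} ≠ ⊤ :=
    ((measure_mono (sep_subset _ _)).trans_lt measure_Icc_lt_top).ne
  calc volume.restrict (Ioc 0 1) {v | Δ v ≤ x}
      ≤ volume {v ∈ Icc (0:ℝ) 1 | Δ v ≤ x} := by
        rw [Measure.restrict_apply' measurableSet_Ioc]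
        exact measure_mono fun v hv => ⟨Ioc_subset_Icc_self hv.2, hv.1⟩
    _ ≤ ENNReal.ofReal (C * x) :=
        (ENNReal.le_ofReal_iff_toReal_le hfin (by positivity)).2 (hmc x hx)

lemma mul_rpow_div_sq_le {c B m x p : ℝ} (hc : 0 ≤ c) (hcB : c ≤ B * m ^ (1 - p)) (hm : 0 < m)
    (hmx : m ≤ x) (hp : p ≤ 2) :
    c * x ^ p / x ^ 2 ≤ B * m⁻¹ := calc
  c * x ^ p / x ^ 2 = c * x ^ (p - 2) := by
    rw [Real.rpow_sub (hm.trans_le hmx), Real.rpow_two]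
    ring
  _ ≤ c * m ^ (p - 2) :=
    mul_le_mul_of_nonneg_left (Real.rpow_le_rpow_of_nonpos hm hmx (by linarith)) hc
  _ ≤ B * m ^ (1 - p) * m ^ (p - 2) := mul_le_mul_of_nonneg_right hcB (by positivity)
  _ = B * m⁻¹ := by
    rw [mul_assoc, ← Real.rpow_add hm, show 1 - p + (p - 2) = (-1 : ℝ) by ring,
      Real.rpow_neg_one]

theorem boundary_terms_bound_general (Δ : ℝ → ℝ) (Δstar C p : ℝ)
    (hmeas : Measurable Δ)
    (hlow : ∀ v ∈ Icc (0:ℝ) 1, Δstar ≤ Δ v)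
    (hΔstar : 0 < Δstar) (hC : 0 < C)
    (hmc : ∀ x > (0:ℝ), (volume {v ∈ Icc (0:ℝ) 1 | Δ v ≤ x}).toReal ≤ C * x)
    (hp : p ∈ Ioo (1:ℝ) 2)
    (u u' : ℝ → ℝ)
    (hbij : BijOn u (Icc 0 1) (Icc 0 1))
    (hode : ∀ s ∈ Icc (0:ℝ) 1, u' s = (∫ v in (0:ℝ)..1, Δ v ^ (-p)) * Δ (u s) ^ p) :
    u' 0 / Δ (u 0) ^ 2 ≤ (C * p / (p - 1)) * Δstar⁻¹
    ∧ u' 1 / Δ (u 1) ^ 2 ≤ (C * p / (p - 1)) * Δstar⁻¹ := by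
  have hcp_nonneg : 0 ≤ ∫ v in (0:ℝ)..1, Δ v ^ (-p) :=
    intervalIntegral.integral_nonneg zero_le_one fun v hv =>
      Real.rpow_nonneg (hΔstar.le.trans (hlow v hv)) _
  have hcp_le := intervalIntegral_rpow_neg_le hΔstar hC.le hp.1 hmeas hlow hmc
  have hbound : ∀ s ∈ Icc (0:ℝ) 1, u' s / Δ (u s) ^ 2 ≤ C * p / (p - 1) * Δstar⁻¹ := by
    intro s hs
    rw [hode s hs]
    exact mul_rpow_div_sq_le hcp_nonneg hcp_le hΔstar (hlow _ (hbij.mapsTo hs)) hp.2.le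
  exact ⟨hbound 0 (left_mem_Icc.2 zero_le_one), hbound 1 (right_mem_Icc.2 zero_le_one)⟩

/-- Boundary-term bounds for the power-law schedule: `u'(0)/Δ(u(0))² ≤ (Cp/(p−1))Δ*⁻¹`
and the same at `s = 1`. -/
theorem boundary_terms_bound (Δ : ℝ → ℝ) (Δstar C p : ℝ)
    (hmeas : Measurable Δ)
    (hlow : ∀ v ∈ Icc (0:ℝ) 1, Δstar ≤ Δ v)
    (hΔstar : 0 < Δstar) (hC : 0 < C)
    (hmc : ∀ x > (0:ℝ), (volume {v ∈ Icc (0:ℝ) 1 | Δ v ≤ x}).toReal ≤ C * x)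
    (hp : p ∈ Ioo (1:ℝ) 2)
    (u u' : ℝ → ℝ)
    (hbij : BijOn u (Icc 0 1) (Icc 0 1))
    (hderiv : ∀ s ∈ Icc (0:ℝ) 1, HasDerivAt u (u' s) s)
    (hu'cont : ContinuousOn u' (Icc 0 1))
    (hode : ∀ s ∈ Icc (0:ℝ) 1, u' s = (∫ v in (0:ℝ)..1, Δ v ^ (-p)) * Δ (u s) ^ p) :
    u' 0 / Δ (u 0) ^ 2 ≤ (C * p / (p - 1)) * Δstar⁻¹
    ∧ u' 1 / Δ (u 1) ^ 2 ≤ (C * p / (p - 1)) * Δstar⁻¹ :=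
  boundary_terms_bound_general Δ Δstar C p hmeas hlow hΔstar hC hmc hp u u' hbij hode
end

section
/- Let Δ : [0,1] → ℝ be measurable with Δ ≥ Δ* > 0 satisfying the measure condition with constant C, p ∈ (1,2), and u : [0,1] → [0,1] the power-law schedule with u'(s) = c_p Δ(u(s))^p, c_p = ∫₀¹ Δ^{−p}. Then ∫₀¹ u'(s)² / Δ(u(s))³ ds = c_p ∫₀¹ Δ(v)^{p−3} dv ≤ (Cp/(p−1))·(C(3−p)/(2−p))·Δ*^{−1}. -/
/-!
By the layer-cake formula, `∫₀¹ Δ^{-α} = ∫₀^{Δ*^{-α}} |{Δ^{-α} ≥ t}| dt`, and since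
`{Δ^{-α} ≥ t} = {Δ ≤ t^{-1/α}}` the measure condition bounds the integrand by
`C t^{-1/α}`, which is integrable at `0` exactly when `α > 1`; this gives
`∫₀¹ Δ^{-α} ≤ Cα/(α-1) · Δ*^{1-α}`.
The substitution `v = u(s)`, with `|u'| = c_p Δ(u)^p`, turns the first-derivative term into
`c_p ∫₀¹ Δ^{p-3}`, and the gap integral bounds for `α = p` and `α = 3 - p` multiply to the
claim because `Δ*^{1-p} Δ*^{p-2} = Δ*⁻¹`.
-/

open MeasureTheory Set
open scoped ENNReal

section LayerCake

variable {X : Type*} [MeasurableSpace X] {μ : Measure X}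

theorem lintegral_ofReal_le_setLIntegral_of_meas_le {f : X → ℝ} {T : ℝ}
    {φ : ℝ → ℝ≥0∞}
    (hf : 0 ≤ᵐ[μ] f) (hfm : AEMeasurable f μ) (hfT : ∀ᵐ x ∂μ, f x ≤ T)
    (hφ : ∀ t ∈ Ioc 0 T, μ {x | t ≤ f x} ≤ φ t) :
    ∫⁻ x, ENNReal.ofReal (f x) ∂μ ≤ ∫⁻ t in Ioc 0 T, φ t := by
  have htail : ∫⁻ t in Ioi T, μ {x | t ≤ f x} = 0 :=
    setLIntegral_eq_zero measurableSet_Ioi fun t ht => measure_eq_zero_iff_ae_notMem.2 <|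
      hfT.mono fun x hx htx => (not_le.2 ht) (htx.trans hx)
  calc ∫⁻ x, ENNReal.ofReal (f x) ∂μ = ∫⁻ t in Ioi 0, μ {x | t ≤ f x} :=
        lintegral_eq_lintegral_meas_le μ hf hfm
    _ ≤ ∫⁻ t in Ioc 0 T ∪ Ioi T, μ {x | t ≤ f x} :=
        lintegral_mono_set fun t ht => (le_or_gt t T).imp (fun h => ⟨ht, h⟩) id
    _ ≤ (∫⁻ t in Ioc 0 T, μ {x | t ≤ f x}) + ∫⁻ t in Ioi T, μ {x | t ≤ f x} :=
        lintegral_union_le _ _ _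
    _ ≤ ∫⁻ t in Ioc 0 T, φ t := by
        simpa only [htail, add_zero] using setLIntegral_mono' measurableSet_Ioc hφ

end LayerCake

theorem lintegral_Ioc_ofReal_mul_rpow_neg {C β T : ℝ} (hC : 0 ≤ C) (hβ : β < 1)
    (hT : 0 ≤ T) :
    ∫⁻ t in Ioc 0 T, ENNReal.ofReal (C * t ^ (-β))
      = ENNReal.ofReal (C * T ^ (1 - β) / (1 - β)) := by
  have hint : IntegrableOn (fun t : ℝ => C * t ^ (-β)) (Ioc 0 T) :=
    ((intervalIntegrable_iff_integrableOn_Ioc_of_le hT).1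
      (intervalIntegral.intervalIntegrable_rpow' (by linarith))).const_mul C
  rw [← ofReal_integral_eq_lintegral_ofReal hint
    ((ae_restrict_iff' measurableSet_Ioc).2
      (ae_of_all _ fun t ht => mul_nonneg hC (Real.rpow_nonneg ht.1.le _))),
    ← intervalIntegral.integral_of_le hT, intervalIntegral.integral_const_mul,
    integral_rpow (Or.inl (by linarith)), Real.zero_rpow (by linarith), neg_add_eq_sub]
  ring_nf

section GapIntegral

variable {X : Type*} [MeasurableSpace X] {μ : Measure X} {s : Set X} {g : X → ℝ} {C α : ℝ}

theorem restrict_measure_setOf_le_rpow_neg_le (hs : MeasurableSet s) (hμs : μ s ≠ ⊤)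
    (hpos : ∀ x ∈ s, 0 < g x) (hα : 0 < α)
    (hmc : ∀ y > 0, (μ {x ∈ s | g x ≤ y}).toReal ≤ C * y) {t : ℝ} (ht : 0 < t) :
    μ.restrict s {x | t ≤ g x ^ (-α)} ≤ ENNReal.ofReal (C * t ^ (-α⁻¹)) := by
  have hy : 0 < t ^ (-α⁻¹) := Real.rpow_pos_of_pos ht _
  have hsub : {x | t ≤ g x ^ (-α)} ∩ s ⊆ {x ∈ s | g x ≤ t ^ (-α⁻¹)} := by
    rintro x ⟨htx, hx⟩
    refine ⟨hx, ?_⟩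
    have h := Real.rpow_le_rpow_of_nonpos ht htx (neg_nonpos.2 (inv_nonneg.2 hα.le))
    rwa [← Real.rpow_mul (hpos x hx).le, neg_mul_neg, mul_inv_cancel₀ hα.ne', Real.rpow_one]
      at h
  rw [Measure.restrict_apply' hs, ENNReal.le_ofReal_iff_toReal_le
    (measure_ne_top_of_subset inter_subset_right hμs) (ENNReal.toReal_nonneg.trans (hmc _ hy))]
  exact (ENNReal.toReal_mono (measure_ne_top_of_subset (sep_subset _ _) hμs)
    (measure_mono hsub)).trans (hmc _ hy)

theorem setIntegral_rpow_neg_le {m : ℝ} (hs : MeasurableSet s) (hμs : μ s ≠ ⊤)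
    (hg : Measurable g) (hlow : ∀ x ∈ s, m ≤ g x) (hm : 0 < m)
    (hmc : ∀ y > 0, (μ {x ∈ s | g x ≤ y}).toReal ≤ C * y) (hα : 1 < α) :
    ∫ x in s, g x ^ (-α) ∂μ ≤ C * α / (α - 1) * m ^ (1 - α) := by
  have hpos : ∀ x ∈ s, 0 < g x := fun x hx => hm.trans_le (hlow x hx)
  have hC : 0 ≤ C := by simpa using ENNReal.toReal_nonneg.trans (hmc 1 one_pos)
  have hα' : 0 < 1 - α⁻¹ := sub_pos.2 (inv_lt_one_of_one_lt₀ hα)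
  have hnn : 0 ≤ᵐ[μ.restrict s] fun x => g x ^ (-α) :=
    (ae_restrict_iff' hs).2 (ae_of_all _ fun x hx => (Real.rpow_pos_of_pos (hpos x hx) _).le)
  have hle : ∀ᵐ x ∂μ.restrict s, g x ^ (-α) ≤ m ^ (-α) :=
    (ae_restrict_iff' hs).2 (ae_of_all _ fun x hx =>
      Real.rpow_le_rpow_of_nonpos hm (hlow x hx) (by linarith))
  have hlin := lintegral_ofReal_le_setLIntegral_of_meas_le hnn (by fun_prop) hle
    fun t ht => restrict_measure_setOf_le_rpow_neg_le hs hμs hpos (by linarith) hmc ht.1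
  rw [lintegral_Ioc_ofReal_mul_rpow_neg hC (inv_lt_one_of_one_lt₀ hα) (by positivity)] at hlin
  rw [integral_eq_lintegral_of_nonneg_ae hnn (hg.pow_const _).aestronglyMeasurable]
  refine (ENNReal.toReal_le_of_le_ofReal (by positivity) hlin).trans_eq ?_
  rw [← Real.rpow_mul hm.le]
  field_simp
  rw [neg_sub]

end GapIntegral

theorem setIntegral_sq_deriv_div_pow_three_eq {s t : Set ℝ} (hs : MeasurableSet s)
    {u u' Δ : ℝ → ℝ} {c p : ℝ} (hc : 0 ≤ c) (hbij : BijOn u s t)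
    (hderiv : ∀ x ∈ s, HasDerivWithinAt u (u' x) s x) (hpos : ∀ v ∈ t, 0 < Δ v)
    (hode : ∀ x ∈ s, u' x = c * Δ (u x) ^ p) :
    ∫ x in s, u' x ^ 2 / Δ (u x) ^ 3 = c * ∫ v in t, Δ v ^ (p - 3) := by
  have hcov := integral_image_eq_integral_abs_deriv_smul hs hderiv hbij.injOn
    fun v => Δ v ^ (p - 3)
  rw [hbij.image_eq] at hcov
  rw [hcov, ← integral_const_mul]
  refine setIntegral_congr_fun hs fun x hx => ?_
  have hd := hpos _ (hbij.mapsTo hx)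
  rw [smul_eq_mul, hode x hx, abs_of_nonneg (by positivity), Real.rpow_sub hd, Real.rpow_ofNat]
  field_simp

theorem first_derivative_term_bound_general (Δ : ℝ → ℝ) (Δstar C p : ℝ)
    (hmeas : Measurable Δ)
    (hlow : ∀ v ∈ Icc (0:ℝ) 1, Δstar ≤ Δ v)
    (hΔstar : 0 < Δstar)
    (hmc : ∀ x > (0:ℝ), (volume {v ∈ Icc (0:ℝ) 1 | Δ v ≤ x}).toReal ≤ C * x)
    (hp : p ∈ Ioo (1:ℝ) 2)
    (u u' : ℝ → ℝ)
    (hbij : BijOn u (Icc 0 1) (Icc 0 1))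
    (hderiv : ∀ s ∈ Icc (0:ℝ) 1, HasDerivAt u (u' s) s)
    (hode : ∀ s ∈ Icc (0:ℝ) 1, u' s = (∫ v in (0:ℝ)..1, Δ v ^ (-p)) * Δ (u s) ^ p) :
    (∫ s in (0:ℝ)..1, (u' s) ^ 2 / Δ (u s) ^ 3
        = (∫ v in (0:ℝ)..1, Δ v ^ (-p)) * ∫ v in (0:ℝ)..1, Δ v ^ (p - 3))
    ∧ ∫ s in (0:ℝ)..1, (u' s) ^ 2 / Δ (u s) ^ 3
        ≤ (C * p / (p - 1)) * (C * (3 - p) / (2 - p)) * Δstar⁻¹ := by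
  obtain ⟨hp1, hp2⟩ := hp
  have hIcc (f : ℝ → ℝ) : ∫ v in (0:ℝ)..1, f v = ∫ v in Icc (0:ℝ) 1, f v := by
    rw [intervalIntegral.integral_of_le zero_le_one, integral_Icc_eq_integral_Ioc]
  have hpos (v) (hv : v ∈ Icc (0:ℝ) 1) : 0 < Δ v := hΔstar.trans_le (hlow v hv)
  have hnn (q : ℝ) : 0 ≤ ∫ v in (0:ℝ)..1, Δ v ^ q := intervalIntegral.integral_nonneg
    zero_le_one fun v hv => (Real.rpow_pos_of_pos (hpos v hv) _).le
  have heq : ∫ s in (0:ℝ)..1, (u' s) ^ 2 / Δ (u s) ^ 3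
      = (∫ v in (0:ℝ)..1, Δ v ^ (-p)) * ∫ v in (0:ℝ)..1, Δ v ^ (p - 3) := by
    rw [hIcc, hIcc (fun v => Δ v ^ (p - 3))]
    exact setIntegral_sq_deriv_div_pow_three_eq measurableSet_Icc (hnn _) hbij
      (fun s hs => (hderiv s hs).hasDerivWithinAt) hpos hode
  have hvol : volume (Icc (0:ℝ) 1) ≠ ⊤ := by simp
  have h₁ := setIntegral_rpow_neg_le measurableSet_Icc hvol hmeas hlow hΔstar hmc hp1
  have h₂ := setIntegral_rpow_neg_le measurableSet_Icc hvol hmeas hlow hΔstar hmc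
    (α := 3 - p) (by linarith)
  rw [← hIcc] at h₁ h₂
  rw [neg_sub] at h₂
  refine ⟨heq, heq ▸ ?_⟩
  calc _ ≤ C * p / (p - 1) * Δstar ^ (1 - p)
          * (C * (3 - p) / (3 - p - 1) * Δstar ^ (1 - (3 - p))) :=
        mul_le_mul h₁ h₂ (hnn _) ((hnn _).trans h₁)
    _ = C * p / (p - 1) * (C * (3 - p) / (2 - p)) * Δstar ^ ((1 - p) + (1 - (3 - p))) := by
        rw [Real.rpow_add hΔstar]; ring_nf
    _ = _ := by rw [show (1 - p) + (1 - (3 - p)) = -1 by ring, Real.rpow_neg_one]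

/-- The first-order-derivative term of the adiabatic error under power-law scheduling:
`∫₀¹ u'(s)²/Δ(u(s))³ ds = c_p ∫₀¹ Δ(v)^{p−3} dv ≤ (Cp/(p−1))·(C(3−p)/(2−p))·Δ*⁻¹`. -/
theorem first_derivative_term_bound (Δ : ℝ → ℝ) (Δstar C p : ℝ)
    (hmeas : Measurable Δ)
    (hlow : ∀ v ∈ Icc (0:ℝ) 1, Δstar ≤ Δ v)
    (hΔstar : 0 < Δstar) (hC : 0 < C)
    (hmc : ∀ x > (0:ℝ), (volume {v ∈ Icc (0:ℝ) 1 | Δ v ≤ x}).toReal ≤ C * x)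
    (hp : p ∈ Ioo (1:ℝ) 2)
    (u u' : ℝ → ℝ)
    (hbij : BijOn u (Icc 0 1) (Icc 0 1))
    (hderiv : ∀ s ∈ Icc (0:ℝ) 1, HasDerivAt u (u' s) s)
    (hu'cont : ContinuousOn u' (Icc 0 1))
    (hode : ∀ s ∈ Icc (0:ℝ) 1, u' s = (∫ v in (0:ℝ)..1, Δ v ^ (-p)) * Δ (u s) ^ p) :
    (∫ s in (0:ℝ)..1, (u' s) ^ 2 / Δ (u s) ^ 3
        = (∫ v in (0:ℝ)..1, Δ v ^ (-p)) * ∫ v in (0:ℝ)..1, Δ v ^ (p - 3))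
    ∧ ∫ s in (0:ℝ)..1, (u' s) ^ 2 / Δ (u s) ^ 3
        ≤ (C * p / (p - 1)) * (C * (3 - p) / (2 - p)) * Δstar⁻¹ :=
  first_derivative_term_bound_general Δ Δstar C p hmeas hlow hΔstar hmc hp u u' hbij hderiv hode
end

section
/- Let Δ : [0,1] → ℝ be C¹ with Δ ≥ Δ* > 0, |Δ'(v)| ≤ 2A for all v, satisfying the measure condition with constant C; let p ∈ (1,2) and u the power-law schedule u' = c_p Δ(u)^p with c_p = ∫₀¹ Δ^{−p}. Then ∫₀¹ |u''(s)| / Δ(u(s))² ds ≤ 2pA · (Cp/(p−1)) · (C(3−p)/(2−p)) · Δ*^{−1}. -/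
open MeasureTheory Set


lemma gap_integral {Δ : ℝ → ℝ} {Δstar C α : ℝ}
    (hcont : ContinuousOn Δ (Icc 0 1))
    (hlow : ∀ v ∈ Icc (0:ℝ) 1, Δstar ≤ Δ v)
    (hΔstar : 0 < Δstar) (hC : 0 < C)
    (hmc : ∀ x > (0:ℝ), (volume {v ∈ Icc (0:ℝ) 1 | Δ v ≤ x}).toReal ≤ C * x)
    (hα : 1 < α) :
    ∫ v in (0:ℝ)..1, Δ v ^ (-α) ≤ C * α / (α - 1) * Δstar ^ (1 - α) := by
  have hα0 : 0 < α := lt_trans one_pos hα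
  have hΔpos : ∀ v ∈ Icc (0:ℝ) 1, 0 < Δ v := fun v hv => lt_of_lt_of_le hΔstar (hlow v hv)
  set M : ℝ := Δstar ^ (-α) with hM
  have hMpos : 0 < M := Real.rpow_pos_of_pos hΔstar _
  set f : ℝ → ℝ := fun v => Δ v ^ (-α) with hf
  set μ : Measure ℝ := volume.restrict (Icc 0 1) with hμ
  have hfcont : ContinuousOn f (Icc 0 1) :=
    hcont.rpow_const (fun v hv => Or.inl (ne_of_gt (hΔpos v hv)))
  have hfint : Integrable f μ := hfcont.integrableOn_Icc
  have hfnn : 0 ≤ᵐ[μ] f := by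
    filter_upwards [ae_restrict_mem measurableSet_Icc] with v hv
    exact Real.rpow_nonneg (hΔpos v hv).le _
  have hfbdd : f ≤ᵐ[μ] fun _ => M := by
    filter_upwards [ae_restrict_mem measurableSet_Icc] with v hv
    exact Real.rpow_le_rpow_of_nonpos hΔstar (hlow v hv) (neg_nonpos.mpr hα0.le)
  have key := hfint.integral_eq_integral_Ioc_meas_le hfnn hfbdd
  -- rewrite interval integral as integral over μ
  have h1 : ∫ v in (0:ℝ)..1, Δ v ^ (-α) = ∫ v, f v ∂μ := by
    rw [intervalIntegral.integral_of_le (by norm_num : (0:ℝ) ≤ 1), hμ,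
      ← integral_Icc_eq_integral_Ioc]
  rw [h1, key]
  -- bound the tail measure
  have hbound : ∀ t ∈ Ioc (0:ℝ) M,
      (μ {a : ℝ | t ≤ f a}).toReal ≤ C * t ^ (-α⁻¹) := by
    intro t ht
    have ht0 : 0 < t := ht.1
    set x : ℝ := t ^ (-α⁻¹) with hx
    have hx0 : 0 < x := Real.rpow_pos_of_pos ht0 _
    have hsub : {a : ℝ | t ≤ f a} ∩ Icc 0 1 ⊆ {v ∈ Icc (0:ℝ) 1 | Δ v ≤ x} := by
      rintro v ⟨hvf, hv⟩
      refine ⟨hv, ?_⟩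
      by_contra hlt
      push_neg at hlt
      have hxα : x ^ (-α) = t := by
        rw [hx, ← Real.rpow_mul ht0.le]
        rw [show -α⁻¹ * -α = 1 by field_simp]
        exact Real.rpow_one t
      have h2 : Δ v ^ (-α) < x ^ (-α) :=
        Real.rpow_lt_rpow_of_neg hx0 hlt (by linarith : -α < 0)
      rw [hxα] at h2
      exact absurd hvf (not_le.mpr h2)
    calc (μ {a : ℝ | t ≤ f a}).toReal
        = (volume ({a : ℝ | t ≤ f a} ∩ Icc 0 1)).toReal := by
          rw [hμ, Measure.restrict_apply' measurableSet_Icc]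
      _ ≤ (volume {v ∈ Icc (0:ℝ) 1 | Δ v ≤ x}).toReal := by
          apply ENNReal.toReal_mono
          · refine ne_of_lt (lt_of_le_of_lt (measure_mono (fun v hv => hv.1)) ?_)
            simp [Real.volume_Icc]
          · exact measure_mono hsub
      _ ≤ C * x := hmc x hx0
  -- integrability of the dominating function
  have hdom : IntegrableOn (fun t : ℝ => C * t ^ (-α⁻¹)) (Ioc 0 M) := by
    have : IntervalIntegrable (fun t : ℝ => t ^ (-α⁻¹)) volume 0 M := by
      apply intervalIntegral.intervalIntegrable_rpow'
      rw [neg_lt_neg_iff]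
      exact inv_lt_one_of_one_lt₀ hα
    exact ((intervalIntegrable_iff_integrableOn_Ioc_of_le hMpos.le).mp this).const_mul C
  have hmono : ∫ t in Ioc (0:ℝ) M, (μ {a : ℝ | t ≤ f a}).toReal
      ≤ ∫ t in Ioc (0:ℝ) M, C * t ^ (-α⁻¹) := by
    apply integral_mono_of_nonneg
    · filter_upwards with t using ENNReal.toReal_nonneg
    · exact hdom
    · filter_upwards [ae_restrict_mem measurableSet_Ioc] with t ht using hbound t ht
  refine le_trans hmono ?_
  -- compute the integral of the dominating function
  have hr : (-1:ℝ) < -α⁻¹ := by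
    rw [neg_lt_neg_iff]; exact inv_lt_one_of_one_lt₀ hα
  have hcalc : ∫ t in Ioc (0:ℝ) M, C * t ^ (-α⁻¹)
      = C * ((M ^ (-α⁻¹ + 1) - (0:ℝ) ^ (-α⁻¹ + 1)) / (-α⁻¹ + 1)) := by
    rw [integral_const_mul, ← intervalIntegral.integral_of_le hMpos.le,
      integral_rpow (Or.inl hr)]
  have hinv : (0:ℝ) < -α⁻¹ + 1 := by
    have := inv_lt_one_of_one_lt₀ hα; linarith
  rw [hcalc, Real.zero_rpow (ne_of_gt hinv), sub_zero]
  have hMval : M ^ (-α⁻¹ + 1) = Δstar ^ (1 - α) := by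
    rw [hM, ← Real.rpow_mul hΔstar.le]
    congr 1
    field_simp
    ring
  rw [hMval]
  apply le_of_eq
  have hα1 : α - 1 ≠ 0 := by linarith
  have hαne : α ≠ 0 := hα0.ne'
  rw [show -α⁻¹ + 1 = (α - 1)/α by field_simp; ring, div_div_eq_mul_div]
  ring

/-- The second-order-derivative term of the adiabatic error under power-law scheduling:
`∫₀¹ |u''(s)|/Δ(u(s))² ds ≤ 2pA·(Cp/(p−1))·(C(3−p)/(2−p))·Δ*⁻¹`, where `|Δ'| ≤ 2A`. -/
theorem second_derivative_term_bound (Δ Δ' : ℝ → ℝ) (Δstar C A p : ℝ)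
    (hΔderiv : ∀ v, HasDerivAt Δ (Δ' v) v)
    (hΔ'cont : Continuous Δ')
    (hlow : ∀ v ∈ Icc (0:ℝ) 1, Δstar ≤ Δ v)
    (hΔstar : 0 < Δstar) (hC : 0 < C) (hA : 0 < A)
    (hΔ'bound : ∀ v ∈ Icc (0:ℝ) 1, |Δ' v| ≤ 2 * A)
    (hmc : ∀ x > (0:ℝ), (volume {v ∈ Icc (0:ℝ) 1 | Δ v ≤ x}).toReal ≤ C * x)
    (hp : p ∈ Ioo (1:ℝ) 2)
    (u u' u'' : ℝ → ℝ)
    (hbij : BijOn u (Icc 0 1) (Icc 0 1))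
    (hderiv : ∀ s ∈ Icc (0:ℝ) 1, HasDerivAt u (u' s) s)
    (hderiv2 : ∀ s ∈ Icc (0:ℝ) 1, HasDerivAt u' (u'' s) s)
    (hode : ∀ s ∈ Icc (0:ℝ) 1, u' s = (∫ v in (0:ℝ)..1, Δ v ^ (-p)) * Δ (u s) ^ p) :
    ∫ s in (0:ℝ)..1, |u'' s| / Δ (u s) ^ 2
      ≤ 2 * p * A * (C * p / (p - 1)) * (C * (3 - p) / (2 - p)) * Δstar⁻¹ := by
  obtain ⟨hp1, hp2⟩ := hp
  have hp0 : 0 < p := lt_trans one_pos hp1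
  set c : ℝ := ∫ v in (0:ℝ)..1, Δ v ^ (-p) with hc
  have hΔcont : Continuous Δ := by
    rw [continuous_iff_continuousAt]; exact fun v => (hΔderiv v).continuousAt
  have hΔpos : ∀ v ∈ Icc (0:ℝ) 1, 0 < Δ v := fun v hv => lt_of_lt_of_le hΔstar (hlow v hv)
  -- c > 0
  have hcpos : 0 < c := by
    rw [hc]
    apply intervalIntegral.intervalIntegral_pos_of_pos_on
    · exact ContinuousOn.intervalIntegrable (by
        rw [uIcc_of_le (by norm_num : (0:ℝ) ≤ 1)]
        exact hΔcont.continuousOn.rpow_const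
          (fun v hv => Or.inl (ne_of_gt (hΔpos v hv))))
    · exact fun x hx => Real.rpow_pos_of_pos (hΔpos x (Ioo_subset_Icc_self hx)) _
    · norm_num
  -- u' positive on Icc
  have hu'pos : ∀ s ∈ Icc (0:ℝ) 1, 0 < u' s := by
    intro s hs
    rw [hode s hs]
    exact mul_pos hcpos (Real.rpow_pos_of_pos (hΔpos _ (hbij.mapsTo hs)) _)
  have hucont : ContinuousOn u (Icc 0 1) :=
    fun s hs => (hderiv s hs).continuousAt.continuousWithinAt
  -- u strictly monotone on Icc
  have humono : StrictMonoOn u (Icc 0 1) := by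
    apply strictMonoOn_of_deriv_pos (convex_Icc 0 1) hucont
    intro x hx
    rw [interior_Icc] at hx
    rw [(hderiv x (Ioo_subset_Icc_self hx)).deriv]
    exact hu'pos x (Ioo_subset_Icc_self hx)
  -- endpoints
  have hu0 : u 0 = 0 := by
    obtain ⟨s, hs, hus⟩ := hbij.surjOn (show (0:ℝ) ∈ Icc (0:ℝ) 1 by norm_num)
    have h1 : u 0 ≤ u s :=
      (humono.monotoneOn) (left_mem_Icc.mpr (by norm_num)) hs hs.1
    have h2 := (hbij.mapsTo (left_mem_Icc.mpr (by norm_num : (0:ℝ) ≤ 1))).1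
    rw [hus] at h1
    linarith
  have hu1 : u 1 = 1 := by
    obtain ⟨s, hs, hus⟩ := hbij.surjOn (show (1:ℝ) ∈ Icc (0:ℝ) 1 by norm_num)
    have h1 : u s ≤ u 1 :=
      (humono.monotoneOn) hs (right_mem_Icc.mpr (by norm_num)) hs.2
    have h2 := (hbij.mapsTo (right_mem_Icc.mpr (by norm_num : (0:ℝ) ≤ 1))).2
    rw [hus] at h1
    linarith
  -- formula for u''
  have hform : ∀ s ∈ Ioo (0:ℝ) 1,
      u'' s = c * (Δ' (u s) * u' s * p * Δ (u s) ^ (p - 1)) := by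
    intro s hs
    have hsI : s ∈ Icc (0:ℝ) 1 := Ioo_subset_Icc_self hs
    have hΔu : HasDerivAt (fun t => Δ (u t)) (Δ' (u s) * u' s) s :=
      (hΔderiv (u s)).comp s (hderiv s hsI)
    have hrpow : HasDerivAt (fun t => Δ (u t) ^ p)
        (Δ' (u s) * u' s * p * Δ (u s) ^ (p - 1)) s :=
      hΔu.rpow_const (Or.inl (ne_of_gt (hΔpos _ (hbij.mapsTo hsI))))
    have hmul : HasDerivAt (fun t => c * Δ (u t) ^ p)
        (c * (Δ' (u s) * u' s * p * Δ (u s) ^ (p - 1))) s := hrpow.const_mul c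
    have hequ : u' =ᶠ[nhds s] fun t => c * Δ (u t) ^ p := by
      filter_upwards [isOpen_Ioo.mem_nhds hs] with t ht
      exact hode t (Ioo_subset_Icc_self ht)
    exact (hderiv2 s hsI).unique (hmul.congr_of_eventuallyEq hequ)
  -- define g
  set g : ℝ → ℝ := fun v => c * p * Δ v ^ (p - 1) * |Δ' v| / Δ v ^ 2 with hg
  -- rewrite the integral via a.e. equality
  have hstep1 : ∫ s in (0:ℝ)..1, |u'' s| / Δ (u s) ^ 2
      = ∫ s in (0:ℝ)..1, u' s • g (u s) := by
    apply intervalIntegral.integral_congr_ae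
    have h1 : ∀ᵐ s : ℝ ∂volume, s ∉ ({1} : Set ℝ) :=
      measure_eq_zero_iff_ae_notMem.mp (measure_singleton 1)
    filter_upwards [h1] with s hs1 hsI
    rw [uIoc_of_le (by norm_num : (0:ℝ) ≤ 1)] at hsI
    have hs : s ∈ Ioo (0:ℝ) 1 := ⟨hsI.1, lt_of_le_of_ne hsI.2 (by simpa using hs1)⟩
    have hsIcc : s ∈ Icc (0:ℝ) 1 := Ioo_subset_Icc_self hs
    rw [hform s hs, hg]
    have h2 : 0 < Δ (u s) ^ (p - 1) := Real.rpow_pos_of_pos (hΔpos _ (hbij.mapsTo hsIcc)) _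
    have h3 : 0 < u' s := hu'pos s hsIcc
    rw [abs_mul, abs_mul, abs_mul, abs_mul, abs_of_pos hcpos, abs_of_pos h3,
      abs_of_pos h2, abs_of_pos hp0]
    simp only [smul_eq_mul]
    ring
  rw [hstep1]
  -- change of variables
  have hΔune : ∀ v ∈ Icc (0:ℝ) 1, Δ v ≠ 0 := fun v hv => ne_of_gt (hΔpos v hv)
  have hgcont : ContinuousOn g (Icc 0 1) := by
    apply ContinuousOn.div
    · exact (continuousOn_const.mul
        (hΔcont.continuousOn.rpow_const (fun v hv => Or.inl (hΔune v hv)))).mul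
        hΔ'cont.abs.continuousOn
    · exact (hΔcont.pow 2).continuousOn
    · exact fun v hv => pow_ne_zero 2 (hΔune v hv)
  have hstep2 : ∫ s in (0:ℝ)..1, u' s • g (u s) = ∫ v in (0:ℝ)..1, g v := by
    have h := intervalIntegral.integral_comp_smul_deriv'
      (f := u) (f' := u') (g := g) (a := 0) (b := 1)
      (fun x hx => hderiv x (by rwa [uIcc_of_le (by norm_num : (0:ℝ) ≤ 1)] at hx))
      ?_ ?_
    · rw [hu0, hu1] at h
      exact h
    · -- continuity of u'
      rw [uIcc_of_le (by norm_num : (0:ℝ) ≤ 1)]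
      exact ContinuousOn.congr
        (continuousOn_const.mul
          ((hΔcont.comp_continuousOn hucont).rpow_const
            (fun s hs => Or.inl (hΔune _ (hbij.mapsTo hs)))))
        (fun s hs => hode s hs)
    · rw [uIcc_of_le (by norm_num : (0:ℝ) ≤ 1), hbij.image_eq]
      exact hgcont
  rw [hstep2]
  -- pointwise bound for g
  have hkey : ∀ v ∈ Icc (0:ℝ) 1, Δ v ^ (p - 1) / Δ v ^ 2 = Δ v ^ (p - 3) := by
    intro v hv
    rw [← Real.rpow_natCast (Δ v) 2, ← Real.rpow_sub (hΔpos v hv)]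
    congr 1
    push_cast
    ring
  have hptw : ∀ v ∈ Icc (0:ℝ) 1, g v ≤ 2 * A * c * p * Δ v ^ (p - 3) := by
    intro v hv
    have h2 : (0:ℝ) ≤ Δ v ^ (p - 3) := (Real.rpow_pos_of_pos (hΔpos v hv) _).le
    have hgv : g v = c * p * |Δ' v| * (Δ v ^ (p - 1) / Δ v ^ 2) := by
      rw [hg]; ring
    rw [hgv, hkey v hv]
    calc c * p * |Δ' v| * Δ v ^ (p - 3)
        ≤ c * p * (2 * A) * Δ v ^ (p - 3) := by
          apply mul_le_mul_of_nonneg_right _ h2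
          exact mul_le_mul_of_nonneg_left (hΔ'bound v hv) (by positivity)
      _ = 2 * A * c * p * Δ v ^ (p - 3) := by ring
  have hpow3cont : ContinuousOn (fun v => Δ v ^ (p - 3)) (Icc 0 1) :=
    hΔcont.continuousOn.rpow_const (fun v hv => Or.inl (hΔune v hv))
  have hmono : ∫ v in (0:ℝ)..1, g v
      ≤ ∫ v in (0:ℝ)..1, 2 * A * c * p * Δ v ^ (p - 3) := by
    apply intervalIntegral.integral_mono_on (by norm_num : (0:ℝ) ≤ 1)
    · exact hgcont.intervalIntegrable_of_Icc (by norm_num)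
    · exact (continuousOn_const.mul hpow3cont).intervalIntegrable_of_Icc (by norm_num)
    · exact hptw
  refine le_trans hmono ?_
  rw [intervalIntegral.integral_const_mul]
  set I : ℝ := ∫ v in (0:ℝ)..1, Δ v ^ (p - 3) with hI
  have hInn : (0:ℝ) ≤ I := by
    apply intervalIntegral.integral_nonneg (by norm_num : (0:ℝ) ≤ 1)
    exact fun v hv => (Real.rpow_pos_of_pos (hΔpos v hv) _).le
  -- apply gap lemma twice
  have hB1 : c ≤ C * p / (p - 1) * Δstar ^ (1 - p) := by
    rw [hc]
    exact gap_integral hΔcont.continuousOn hlow hΔstar hC hmc hp1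
  have hB2 : I ≤ C * (3 - p) / (2 - p) * Δstar ^ (p - 2) := by
    have e1 : I = ∫ v in (0:ℝ)..1, Δ v ^ (-(3 - p)) := by
      rw [hI]; simp only [show -(3 - p) = p - 3 from by ring]
    have h := gap_integral hΔcont.continuousOn hlow hΔstar hC hmc
      (show (1:ℝ) < 3 - p by linarith)
    rw [show (3 - p - 1) = 2 - p by ring, show (1 - (3 - p)) = p - 2 by ring] at h
    rw [e1]; exact h
  have hB2nn : (0:ℝ) ≤ C * (3 - p) / (2 - p) * Δstar ^ (p - 2) := by
    have h2p : (0:ℝ) < 2 - p := by linarith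
    have h3p : (0:ℝ) < 3 - p := by linarith
    positivity
  have hpow : Δstar ^ (p - 2) * Δstar ^ (1 - p) = Δstar⁻¹ := by
    rw [← Real.rpow_add hΔstar, show p - 2 + (1 - p) = -1 by ring, Real.rpow_neg_one]
  calc 2 * A * c * p * I
      ≤ 2 * A * c * p * (C * (3 - p) / (2 - p) * Δstar ^ (p - 2)) := by
        apply mul_le_mul_of_nonneg_left hB2 (by positivity)
    _ = (2 * A * p * (C * (3 - p) / (2 - p) * Δstar ^ (p - 2))) * c := by ring
    _ ≤ (2 * A * p * (C * (3 - p) / (2 - p) * Δstar ^ (p - 2)))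
          * (C * p / (p - 1) * Δstar ^ (1 - p)) := by
        apply mul_le_mul_of_nonneg_left hB1 (by positivity)
    _ = 2 * p * A * (C * p / (p - 1)) * (C * (3 - p) / (2 - p))
          * (Δstar ^ (p - 2) * Δstar ^ (1 - p)) := by ring
    _ = 2 * p * A * (C * p / (p - 1)) * (C * (3 - p) / (2 - p)) * Δstar⁻¹ := by
        rw [hpow]
end

section
/- Let Δ : [0,1] → ℝ be measurable with Δ ≥ Δ* > 0 satisfying the measure condition with constant C, and let A = ‖H₁ − H₀‖ and H(s) = (1−s)H₀ + sH₁. Then the linear-schedule error expression η(1) = (C₀/T)·( A/Δ(0)² + A/Δ(1)² + ∫₀¹ A²/Δ(s)³ ds ) satisfies η(1) ≤ (C₀/T)·( 2A·Δ*^{−2} + A²·(3C/2)·Δ*^{−2} ), i.e. η(1) = O(T^{−1} Δ*^{−2}). -/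
open MeasureTheory Set

lemma gap_integral_lemma (Δ : ℝ → ℝ) (Δstar C : ℝ)
    (hmeas : Measurable Δ)
    (hlow : ∀ s ∈ Icc (0:ℝ) 1, Δstar ≤ Δ s)
    (hΔstar : 0 < Δstar) (hC : 0 < C)
    (hmc : ∀ x > (0:ℝ), (volume {s ∈ Icc (0:ℝ) 1 | Δ s ≤ x}).toReal ≤ C * x) :
    ∫ s in Icc (0:ℝ) 1, (Δ s ^ 3)⁻¹ ≤ 3 * C / 2 * (Δstar ^ 2)⁻¹ := by
  set μ := volume.restrict (Icc (0:ℝ) 1) with hμ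
  set f : ℝ → ℝ := fun s => (Δ s ^ 3)⁻¹ with hf
  set M : ℝ := (Δstar ^ 3)⁻¹ with hM
  have hMpos : 0 < M := by positivity
  have hfmeas : Measurable f := (hmeas.pow_const 3).inv
  have hpos : ∀ s ∈ Icc (0:ℝ) 1, 0 < Δ s := fun s hs => lt_of_lt_of_le hΔstar (hlow s hs)
  have f_nn : 0 ≤ᵐ[μ] f := by
    refine (ae_restrict_iff' measurableSet_Icc).mpr (Filter.Eventually.of_forall fun s hs => ?_)
    have := hpos s hs; positivity
  have f_bdd : f ≤ᵐ[μ] fun _ => M := by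
    refine (ae_restrict_iff' measurableSet_Icc).mpr (Filter.Eventually.of_forall fun s hs => ?_)
    have h1 : Δstar ^ 3 ≤ Δ s ^ 3 := pow_le_pow_left₀ hΔstar.le (hlow s hs) 3
    exact inv_anti₀ (by positivity) h1
  have f_intble : Integrable f μ := by
    refine Measure.integrableOn_of_bounded (M := M) (by simp) hfmeas.aestronglyMeasurable ?_
    rw [ae_restrict_iff' measurableSet_Icc]
    refine Filter.Eventually.of_forall fun s hs => ?_
    rw [Real.norm_eq_abs, abs_of_nonneg (by have := hpos s hs; positivity)]
    have h1 : Δstar ^ 3 ≤ Δ s ^ 3 := pow_le_pow_left₀ hΔstar.le (hlow s hs) 3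
    exact inv_anti₀ (by positivity) h1
  have key := f_intble.integral_eq_integral_Ioc_meas_le f_nn f_bdd
  rw [key]
  have hbound : ∀ t ∈ Ioc (0:ℝ) M,
      (μ {a : ℝ | t ≤ f a}).toReal ≤ C * t ^ (-(1/3) : ℝ) := by
    intro t ht
    have ht0 : (0:ℝ) < t := ht.1
    have hx : (0:ℝ) < t ^ (-(1/3) : ℝ) := Real.rpow_pos_of_pos ht0 _
    have hsub : {a : ℝ | t ≤ f a} ∩ Icc (0:ℝ) 1 ⊆
        {s ∈ Icc (0:ℝ) 1 | Δ s ≤ t ^ (-(1/3) : ℝ)} := by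
      rintro a ⟨ha, haI⟩
      refine ⟨haI, ?_⟩
      have hΔa := hpos a haI
      have h1 : Δ a ^ 3 ≤ t⁻¹ := by
        rw [← inv_inv (Δ a ^ 3)]
        exact inv_anti₀ (by positivity) ha
      have h2 : (Δ a ^ 3) ^ ((1:ℝ)/3) ≤ (t⁻¹) ^ ((1:ℝ)/3) :=
        Real.rpow_le_rpow (by positivity) h1 (by norm_num)
      have h3 : (Δ a ^ 3) ^ ((1:ℝ)/3) = Δ a := by
        rw [← Real.rpow_natCast (Δ a) 3, ← Real.rpow_mul hΔa.le]
        norm_num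
      have h4 : (t⁻¹) ^ ((1:ℝ)/3) = t ^ (-(1/3) : ℝ) := by
        rw [← Real.rpow_neg_one t, ← Real.rpow_mul ht0.le]
        norm_num
      rw [h3, h4] at h2
      exact h2
    have hmono : μ {a : ℝ | t ≤ f a} ≤ volume {s ∈ Icc (0:ℝ) 1 | Δ s ≤ t ^ (-(1/3) : ℝ)} := by
      rw [hμ, Measure.restrict_apply (measurableSet_le measurable_const hfmeas)]
      exact measure_mono hsub
    have hfin : volume {s ∈ Icc (0:ℝ) 1 | Δ s ≤ t ^ (-(1/3) : ℝ)} ≠ ⊤ := by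
      refine (lt_of_le_of_lt (measure_mono (fun a ha => ha.1)) ?_).ne
      simp [Real.volume_Icc]
    calc (μ {a : ℝ | t ≤ f a}).toReal
        ≤ (volume {s ∈ Icc (0:ℝ) 1 | Δ s ≤ t ^ (-(1/3) : ℝ)}).toReal :=
          ENNReal.toReal_mono hfin hmono
      _ ≤ C * t ^ (-(1/3) : ℝ) := hmc _ hx
  have hintg : IntegrableOn (fun t => (μ {a : ℝ | t ≤ f a}).toReal) (Ioc (0:ℝ) M) := by
    refine Measure.integrableOn_of_bounded (M := 1) (by simp) ?_ ?_
    · refine (Measurable.ennreal_toReal ?_).aestronglyMeasurable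
      exact Antitone.measurable fun s t hst => measure_mono fun a ha => hst.trans ha
    · refine Filter.Eventually.of_forall fun t => ?_
      rw [Real.norm_eq_abs, abs_of_nonneg ENNReal.toReal_nonneg]
      refine ENNReal.toReal_le_of_le_ofReal zero_le_one ?_
      refine le_trans (measure_mono (subset_univ _)) ?_
      rw [hμ, Measure.restrict_apply_univ]
      simp [Real.volume_Icc]
  have hintg2 : IntegrableOn (fun t => C * t ^ (-(1/3) : ℝ)) (Ioc (0:ℝ) M) := by
    rw [← intervalIntegrable_iff_integrableOn_Ioc_of_le hMpos.le]
    exact (intervalIntegral.intervalIntegrable_rpow' (by norm_num)).const_mul C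
  have hle := setIntegral_mono_on hintg hintg2 measurableSet_Ioc hbound
  refine hle.trans ?_
  rw [← intervalIntegral.integral_of_le hMpos.le,
    intervalIntegral.integral_const_mul, integral_rpow (Or.inl (by norm_num))]
  have hMrw : (M : ℝ) ^ (-(1/3) + 1 : ℝ) = (Δstar ^ 2)⁻¹ := by
    rw [hM, ← Real.rpow_natCast Δstar 3, ← Real.rpow_neg_one, ← Real.rpow_mul hΔstar.le,
      ← Real.rpow_mul hΔstar.le,
      show ((3:ℕ):ℝ) * -1 * (-(1/3) + 1) = -(2:ℕ) by norm_num,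
      Real.rpow_neg hΔstar.le, Real.rpow_natCast]
  rw [Real.zero_rpow (by norm_num), hMrw]
  exact le_of_eq (by ring)

/-- Linear-schedule adiabatic error bound: with `A = ‖H₁ − H₀‖` and the measure
condition on the gap, the Jansen–Ruskai–Seiler error expression for `u(s) = s`
is `O(T⁻¹ Δ*⁻²)`. -/
theorem linear_schedule_error_bound {E : Type*} [NormedAddCommGroup E]
    (H₀ H₁ : E) (Δ : ℝ → ℝ) (Δstar C C₀ T : ℝ)
    (hmeas : Measurable Δ)
    (hlow : ∀ s ∈ Icc (0:ℝ) 1, Δstar ≤ Δ s)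
    (hΔstar : 0 < Δstar) (hC : 0 < C) (hC₀ : 0 < C₀) (hT : 0 < T)
    (hmc : ∀ x > (0:ℝ), (volume {s ∈ Icc (0:ℝ) 1 | Δ s ≤ x}).toReal ≤ C * x) :
    (C₀ / T) * (‖H₁ - H₀‖ / Δ 0 ^ 2 + ‖H₁ - H₀‖ / Δ 1 ^ 2
        + ∫ s in (0:ℝ)..1, ‖H₁ - H₀‖ ^ 2 / Δ s ^ 3)
      ≤ (C₀ / T) * (2 * ‖H₁ - H₀‖ * Δstar ^ (-2 : ℝ)
        + ‖H₁ - H₀‖ ^ 2 * (3 * C / 2) * Δstar ^ (-2 : ℝ)) := by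
  set A := ‖H₁ - H₀‖ with hA
  have hAnn : 0 ≤ A := norm_nonneg _
  have hrpow : Δstar ^ (-2 : ℝ) = (Δstar ^ 2)⁻¹ := by
    rw [show (-2:ℝ) = -(2:ℕ) by norm_num, Real.rpow_neg hΔstar.le, Real.rpow_natCast]
  have hgap := gap_integral_lemma Δ Δstar C hmeas hlow hΔstar hC hmc
  have hint : (∫ s in (0:ℝ)..1, A ^ 2 / Δ s ^ 3)
      = A ^ 2 * ∫ s in Icc (0:ℝ) 1, (Δ s ^ 3)⁻¹ := by
    rw [intervalIntegral.integral_of_le zero_le_one, ← integral_Icc_eq_integral_Ioc,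
      ← integral_const_mul]
    simp_rw [div_eq_mul_inv]
  have hb0 : A / Δ 0 ^ 2 ≤ A / Δstar ^ 2 := by
    gcongr
    exact hlow 0 ⟨le_refl 0, zero_le_one⟩
  have hb1 : A / Δ 1 ^ 2 ≤ A / Δstar ^ 2 := by
    gcongr
    exact hlow 1 ⟨zero_le_one, le_refl 1⟩
  have hi : (∫ s in (0:ℝ)..1, A ^ 2 / Δ s ^ 3) ≤ A ^ 2 * (3 * C / 2 * (Δstar ^ 2)⁻¹) := by
    rw [hint]
    exact mul_le_mul_of_nonneg_left hgap (by positivity)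
  rw [hrpow]
  refine mul_le_mul_of_nonneg_left ?_ (by positivity)
  calc A / Δ 0 ^ 2 + A / Δ 1 ^ 2 + ∫ s in (0:ℝ)..1, A ^ 2 / Δ s ^ 3
      ≤ A / Δstar ^ 2 + A / Δstar ^ 2 + A ^ 2 * (3 * C / 2 * (Δstar ^ 2)⁻¹) :=
        add_le_add (add_le_add hb0 hb1) hi
    _ = 2 * A * (Δstar ^ 2)⁻¹ + A ^ 2 * (3 * C / 2) * (Δstar ^ 2)⁻¹ := by
        rw [div_eq_mul_inv]; ring
end

section
/- Let Δ(v) = αv + β be affine with α ≠ 0 and Δ > 0 on [0,1], and let u : [0,1] → [0,1] be C² with u'(s) = c·Δ(u(s))^{3/2}, c > 0. Then, taking sgn(u''(s)) = sgn(α), the full Euler–Lagrange expression (1/Δ(u)⁴)·[A + 2 sgn(u'')Δ'(u)]·[3(u')²Δ'(u) − 2Δ(u)u''] − 2 sgn(u'')Δ''(u)(u')²/Δ(u)³ vanishes identically on [0,1]. -/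
open Set

/-- For an affine gap `Δ(v) = αv + β` (positive on `[0,1]`, `α ≠ 0`), the power-law
schedule with exponent `p = 3/2` makes the full Euler–Lagrange expression vanish
identically on `[0,1]` (taking `sgn(u'') = sgn(α)`). -/
theorem power_law_solves_full_EL_affine (α β A : ℝ) (hα : α ≠ 0) (hA : 0 < A)
    (hΔpos : ∀ v ∈ Icc (0:ℝ) 1, 0 < α * v + β)
    (c : ℝ) (hc : 0 < c) (u u' u'' : ℝ → ℝ)
    (hmaps : MapsTo u (Icc 0 1) (Icc 0 1))
    (hderiv : ∀ s ∈ Icc (0:ℝ) 1, HasDerivAt u (u' s) s)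
    (hderiv2 : ∀ s ∈ Icc (0:ℝ) 1, HasDerivAt u' (u'' s) s)
    (hode : ∀ s ∈ Icc (0:ℝ) 1, u' s = c * (α * u s + β) ^ (3/2 : ℝ)) :
    ∀ s ∈ Icc (0:ℝ) 1,
      (1 / (α * u s + β) ^ 4) * (A + 2 * Real.sign α * α)
          * (3 * (u' s) ^ 2 * α - 2 * (α * u s + β) * u'' s)
        - 2 * Real.sign α * 0 * (u' s) ^ 2 / (α * u s + β) ^ 3 = 0 := by
  intro s hs
  have hΔ : 0 < α * u s + β := hΔpos _ (hmaps hs)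
  -- the function g s = c * (α u s + β)^(3/2) has deriv within Icc
  have hg : HasDerivWithinAt (fun t => c * (α * u t + β) ^ (3/2 : ℝ))
      (c * (α * u' s * (3/2 : ℝ) * (α * u s + β) ^ ((3/2 : ℝ) - 1))) (Icc 0 1) s := by
    have hin : HasDerivWithinAt (fun t => α * u t + β) (α * u' s) (Icc 0 1) s := by
      simpa using (((hderiv s hs).hasDerivWithinAt.const_mul α).add_const β)
    exact (hin.rpow_const (Or.inl hΔ.ne')).const_mul c
  -- u' agrees with g on Icc, so u'' s equals g's derivative
  have hud : UniqueDiffWithinAt ℝ (Icc (0:ℝ) 1) s :=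
    (uniqueDiffOn_Icc (by norm_num)) s hs
  have hu' : HasDerivWithinAt u' (u'' s) (Icc 0 1) s := (hderiv2 s hs).hasDerivWithinAt
  have hg' : HasDerivWithinAt u'
      (c * (α * u' s * (3/2 : ℝ) * (α * u s + β) ^ ((3/2 : ℝ) - 1))) (Icc 0 1) s :=
    hg.congr (fun t ht => hode t ht) (hode s hs)
  have hu2 : u'' s = c * (α * u' s * (3/2 : ℝ) * (α * u s + β) ^ ((3/2 : ℝ) - 1)) := by
    rw [← hu'.derivWithin hud, hg'.derivWithin hud]
  -- key bracket vanishes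
  have hb : 3 * (u' s) ^ 2 * α - 2 * (α * u s + β) * u'' s = 0 := by
    have hpow : (α * u s + β) * (α * u s + β) ^ ((3/2 : ℝ) - 1)
        = (α * u s + β) ^ (3/2 : ℝ) := by
      rw [← Real.rpow_one_add' hΔ.le (by norm_num)]
      norm_num
    have := hode s hs
    rw [hu2]
    calc 3 * (u' s) ^ 2 * α -
          2 * (α * u s + β) * (c * (α * u' s * (3/2:ℝ) * (α * u s + β) ^ ((3/2:ℝ) - 1)))
        = 3 * α * u' s * (u' s - c * ((α * u s + β) * (α * u s + β) ^ ((3/2:ℝ) - 1))) := by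
          ring
      _ = 0 := by rw [hpow, ← this]; ring
  rw [hb]
  ring
end
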